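/- arXiv:2405.02521 — 3 statements merged into one kernel-verified Lean document; each statement's English description precedes it below -/
import Mathlib

section
/- For all β, a, t ∈ ℝ one has the bound x(γ_{β,a}(t)) ≤ μ_h(a). -/
/-!
The rotation `e^{iβ}` does not change `|γ|`, and with `u = x̂(t)` the Möbius formula gives
`x(γ_{β,a}(t)) = 2(1-u)(1+u) / ((1-u)² + (1+a²)(1+u)²)`. By AM-GM the denominator is at least
`2√(1+a²)·(1-u)(1+u)`, which is the bound.
-/

noncomputable section

/-- `x̂(t) = tanh(t/2)`. -/
def xhat (t : ℝ) : ℝ := Real.tanh (t / 2)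

/-- Horocyclic parameterization of hyperbolic geodesics in the Poincaré disk. -/
def γH (β a t : ℝ) : ℂ :=
  Complex.exp (Complex.I * (β : ℂ)) *
    (((2 + Complex.I * (a : ℂ)) * (xhat t : ℂ) + Complex.I * (a : ℂ)) /
      (Complex.I * (a : ℂ) * (xhat t : ℂ) - 2 + Complex.I * (a : ℂ)))

/-- The distinguished boundary defining function `x(z) = (1−|z|²)/(1+|z|²)`. -/
def xb (z : ℂ) : ℝ := (1 - ‖z‖ ^ 2) / (1 + ‖z‖ ^ 2)

/-- `μ_h(a) = (1+a²)^{−1/2}`. -/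
def μh (a : ℝ) : ℝ := (1 + a ^ 2) ^ (-(1 : ℝ) / 2)

lemma sq_norm_γH (β a t : ℝ) :
    ‖γH β a t‖ ^ 2 =
      (4 * xhat t ^ 2 + a ^ 2 * (xhat t + 1) ^ 2) / (4 + a ^ 2 * (xhat t + 1) ^ 2) := by
  set u := xhat t
  have hnum : (2 + Complex.I * a) * u + Complex.I * a =
      ((2 * u : ℝ) : ℂ) + ((a * u + a : ℝ) : ℂ) * Complex.I := by
    push_cast; ring
  have hden : Complex.I * a * u - 2 + Complex.I * a =
      ((-2 : ℝ) : ℂ) + ((a * u + a : ℝ) : ℂ) * Complex.I := by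
    push_cast; ring
  rw [γH, norm_mul, Complex.norm_exp_I_mul_ofReal, one_mul, norm_div, div_pow, Complex.sq_norm,
    Complex.sq_norm, hnum, hden, Complex.normSq_add_mul_I, Complex.normSq_add_mul_I]
  ring

lemma xb_γH (β a t : ℝ) :
    xb (γH β a t) =
      2 * (1 - xhat t) * (1 + xhat t) / ((1 - xhat t) ^ 2 + (1 + a ^ 2) * (1 + xhat t) ^ 2) := by
  rw [xb, sq_norm_γH]
  set u := xhat t
  have hd : 0 < 4 + a ^ 2 * (u + 1) ^ 2 := by positivity
  have hD : 0 < (1 - u) ^ 2 + (1 + a ^ 2) * (1 + u) ^ 2 := by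
    nlinarith [sq_nonneg u, sq_nonneg (a * (1 + u))]
  rw [one_sub_div hd.ne', one_add_div hd.ne', div_div_div_cancel_right₀ hd.ne',
    div_eq_div_iff (by positivity) hD.ne']
  ring

lemma μh_eq_inv_sqrt (a : ℝ) : μh a = (√(1 + a ^ 2))⁻¹ := by
  rw [μh, neg_div, Real.rpow_neg (by positivity), Real.sqrt_eq_rpow]

lemma two_mul_mul_div_sq_add_sq_mul_sq_le {s : ℝ} (hs : 0 < s) (p q : ℝ) :
    2 * p * q / (p ^ 2 + s ^ 2 * q ^ 2) ≤ s⁻¹ := by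
  have gap : s⁻¹ * (p ^ 2 + s ^ 2 * q ^ 2) - 2 * p * q = s⁻¹ * (p - s * q) ^ 2 := by
    field_simp
    ring
  refine div_le_of_le_mul₀ (by positivity) (inv_nonneg.2 hs.le) ?_
  linarith [mul_nonneg (inv_nonneg.2 hs.le) (sq_nonneg (p - s * q))]

/-- The bound `x(γ_{β,a}(t)) ≤ μ_h(a)` for all `β, a, t ∈ ℝ`. -/
theorem xb_along_horocyclic_le (β a t : ℝ) :
    xb (γH β a t) ≤ μh a := by
  have ha : (0 : ℝ) < 1 + a ^ 2 := by positivity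
  have amgm := two_mul_mul_div_sq_add_sq_mul_sq_le (Real.sqrt_pos.2 ha) (1 - xhat t) (1 + xhat t)
  rwa [Real.sq_sqrt ha.le, ← xb_γH β, ← μh_eq_inv_sqrt] at amgm
end
end

section
/- For any β, a ∈ ℝ, the function t ↦ |γ_{β,a}(t)| attains its minimum exactly at t₀ := −log √(1+a²): for all t ∈ ℝ one has |γ_{β,a}(t₀)| ≤ |γ_{β,a}(t)|, with equality if and only if t = t₀. -/
noncomputable section

/-!
Since `|e^{iβ}| = 1`, the squared modulus `|γ_{β,a}(t)|²` is the rational function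
`(4x² + a²(1+x)²) / (4 + a²(1+x)²)` of `x = x̂(t)`. With `s = √(1+a²)` and `x₀ = (1-s)/(1+s)`,
its excess over the value at `x₀` equals `16 s ((1+s)(1+x) - 2)²` divided by a positive number,
so `x₀` is its unique minimiser on all of `ℝ`. Finally `x̂(-log s) = x₀` and `x̂` is injective.
-/

open Real

theorem xhat_eq (t : ℝ) : xhat t = (exp t - 1) / (exp t + 1) := by
  have h : exp t = exp (t / 2) ^ 2 := by rw [← exp_nat_mul]; ring_nf
  rw [xhat, tanh_eq, h, exp_neg]
  field_simp

theorem xhat_neg_log {s : ℝ} (hs : 0 < s) : xhat (-log s) = (1 - s) / (1 + s) := by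
  rw [xhat_eq, exp_neg, exp_log hs]
  field_simp

theorem xhat_injective : Function.Injective xhat := fun _ _ h => by
  simpa using tanh_injective h

def horoNormSq (a x : ℝ) : ℝ :=
  (4 * x ^ 2 + a ^ 2 * (1 + x) ^ 2) / (4 + a ^ 2 * (1 + x) ^ 2)

theorem norm_γH_sq (β a t : ℝ) : ‖γH β a t‖ ^ 2 = horoNormSq a (xhat t) := by
  rw [γH, norm_mul, Complex.norm_exp_I_mul_ofReal, one_mul, norm_div, div_pow,
    Complex.sq_norm, Complex.sq_norm, horoNormSq]
  simp only [Complex.normSq_apply, Complex.add_re, Complex.mul_re, Complex.re_ofNat, Complex.I_re,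
    Complex.ofReal_re, zero_mul, Complex.I_im, Complex.ofReal_im, mul_zero, sub_self, add_zero,
    Complex.add_im, Complex.im_ofNat, Complex.mul_im, one_mul, zero_add, sub_zero, Complex.sub_re,
    zero_sub, mul_neg, neg_mul, neg_neg, Complex.sub_im]
  ring

theorem horoNormSq_lt {a s x : ℝ} (hs : 0 < s) (ha : a ^ 2 = s ^ 2 - 1)
    (hx : x ≠ (1 - s) / (1 + s)) : horoNormSq a ((1 - s) / (1 + s)) < horoNormSq a x := by
  have hs' : 0 < 1 + s := by linarith
  have hx' : (1 + s) * (1 + x) - 2 ≠ 0 := by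
    contrapose! hx
    field_simp
    linarith
  have key : horoNormSq a x - horoNormSq a ((1 - s) / (1 + s)) =
      16 * s * ((1 + s) * (1 + x) - 2) ^ 2 /
        ((1 + s) ^ 2 * (4 + a ^ 2 * (1 + x) ^ 2) *
          (4 + a ^ 2 * (1 + (1 - s) / (1 + s)) ^ 2)) := by
    simp only [horoNormSq]
    field_simp
    rw [ha]
    ring
  rw [← sub_pos, key]
  positivity

/-- The function `t ↦ |γ_{β,a}(t)|` attains its minimum exactly at
`t₀ = −log √(1+a²)`: for all `t`, `|γ_{β,a}(t₀)| ≤ |γ_{β,a}(t)|`, with equality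
if and only if `t = t₀`. -/
theorem horocyclic_modulus_min (β a t : ℝ) :
    ‖γH β a (-Real.log (Real.sqrt (1 + a ^ 2)))‖ ≤ ‖γH β a t‖ ∧
    (‖γH β a (-Real.log (Real.sqrt (1 + a ^ 2)))‖ = ‖γH β a t‖ ↔
      t = -Real.log (Real.sqrt (1 + a ^ 2))) := by
  set s := √(1 + a ^ 2)
  have hs : 0 < s := sqrt_pos.mpr (by positivity)
  have ha : a ^ 2 = s ^ 2 - 1 := by rw [sq_sqrt (by positivity)]; ring
  rcases eq_or_ne t (-log s) with rfl | ht
  · simp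
  have hx : xhat t ≠ (1 - s) / (1 + s) := by
    rw [← xhat_neg_log hs]
    exact xhat_injective.ne ht
  have hlt : ‖γH β a (-log s)‖ < ‖γH β a t‖ := by
    rw [← pow_lt_pow_iff_left₀ (norm_nonneg _) (norm_nonneg _) two_ne_zero,
      norm_γH_sq, norm_γH_sq, xhat_neg_log hs]
    exact horoNormSq_lt hs ha hx
  exact ⟨hlt.le, iff_of_false hlt.ne ht⟩
end
end

section
/- Explicit projective equivalence: for all ω ∈ ℝ, s ∈ (−1,1), t ∈ ℝ one has Φ(γ^v_{ω,s}(t)) = e^{i(ω+π/2)}·( ((1−s²)/(1+s²))·tanh t − i·(2s/(1+s²)) ). Equivalently, setting α := −2·arctan s (so cos α = (1−s²)/(1+s²) and sin α = −2s/(1+s²)) and β := ω − π/2 − α, one has Φ(γ^v_{ω,s}(t)) = γ^E_{β,α}(u(t)) with u(t) := cos α · tanh t. Moreover the reparameterization satisfies u′(t) = ((1+s²)/(1−s²)) · x(γ^v_{ω,s}(t))². -/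
noncomputable section

/-- Vertex parameterization of hyperbolic geodesics in the Poincaré disk. -/
def γv (ω s t : ℝ) : ℂ :=
  Complex.exp (Complex.I * (ω : ℂ)) *
    (((s : ℂ) + Complex.I * (xhat t : ℂ)) / (1 + Complex.I * (s : ℂ) * (xhat t : ℂ)))

/-- The projective map `Φ(z) = 2z/(1+|z|²)`. -/
def Φm (z : ℂ) : ℂ := 2 * z / (((1 + ‖z‖ ^ 2 : ℝ)) : ℂ)

/-- Fan-beam parameterization of Euclidean chords of the unit disk:
`γ^E_{β,α}(u) = e^{i(β+α+π)}·(u + i·sin α)`. -/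
def γE (β α u : ℝ) : ℂ :=
  Complex.exp (Complex.I * ((β + α + Real.pi : ℝ) : ℂ)) *
    ((u : ℂ) + Complex.I * ((Real.sin α : ℝ) : ℂ))

/-! The vertex parameterization is a rotation of the disc automorphism `x ↦ (s + i x)/(1 + i s x)`
evaluated at `x = tanh (t/2)`. Since `Φ` commutes with rotations and
`1 + |w|² = (1 + s²)(1 + x²)/(1 + s²x²)` for this automorphism, one finds
`Φ(w) = 2s/(1+s²) + i·(1-s²)/(1+s²)·2x/(1+x²)`, and `2x/(1+x²) = tanh t` is the double-angle
formula. The substitution `s = -tan (α/2)` turns the coefficients into `cos α` and `-sin α`.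
Finally `xb γ = cos α·(1-x²)/(1+x²) = cos α / cosh t`, while `u' = cos α / cosh² t`. -/

namespace Real

lemma tanh_two_mul (x : ℝ) : tanh (2 * x) = 2 * tanh x / (1 + tanh x ^ 2) := by
  have := (cosh_pos x).ne'
  rw [tanh_eq_sinh_div_cosh, tanh_eq_sinh_div_cosh, sinh_two_mul, cosh_two_mul]
  field_simp

lemma hasDerivAt_tanh (x : ℝ) : HasDerivAt tanh (1 - tanh x ^ 2) x := by
  have hc := (cosh_pos x).ne'
  have h := (hasDerivAt_sinh x).div (hasDerivAt_cosh x) hc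
  rw [show sinh / cosh = tanh from funext fun y => (tanh_eq_sinh_div_cosh y).symm] at h
  refine h.congr_deriv ?_
  rw [tanh_eq_sinh_div_cosh]
  field_simp

lemma cos_two_mul_arctan (x : ℝ) : cos (2 * arctan x) = (1 - x ^ 2) / (1 + x ^ 2) := by
  rw [cos_two_mul, cos_sq_arctan]
  field_simp
  ring

lemma sin_two_mul_arctan (x : ℝ) : sin (2 * arctan x) = 2 * x / (1 + x ^ 2) := by
  have := sq_sqrt (by positivity : (0 : ℝ) ≤ 1 + x ^ 2)
  rw [sin_two_mul, sin_arctan, cos_arctan]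
  field_simp
  rw [this]

end Real

section

open Complex

def vertexMoebius (s x : ℝ) : ℂ := (s + I * x) / (1 + I * s * x)

lemma vertexMoebius_eq_div (s x : ℝ) :
    vertexMoebius s x =
      ((s * (1 + x ^ 2) : ℝ) + I * (x * (1 - s ^ 2) : ℝ)) / ((1 + s ^ 2 * x ^ 2 : ℝ) : ℂ) := by
  have hden : (1 + I * s * x : ℂ) ≠ 0 := fun h => by simpa using congrArg re h
  have hden' : ((1 + s ^ 2 * x ^ 2 : ℝ) : ℂ) ≠ 0 := by norm_cast; positivity
  rw [vertexMoebius, div_eq_div_iff hden hden']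
  push_cast
  ring_nf
  rw [I_sq]
  ring

lemma norm_sq_vertexMoebius (s x : ℝ) :
    ‖vertexMoebius s x‖ ^ 2 = (s ^ 2 + x ^ 2) / (1 + s ^ 2 * x ^ 2) := by
  rw [vertexMoebius, norm_div, div_pow, Complex.sq_norm, Complex.sq_norm]
  simp only [normSq_apply, add_re, ofReal_re, mul_re, I_re, zero_mul, I_im, ofReal_im, mul_zero,
    sub_self, add_zero, add_im, mul_im, one_mul, zero_add, one_re, mul_one, one_im]
  ring

lemma one_add_norm_sq_vertexMoebius (s x : ℝ) :
    1 + ‖vertexMoebius s x‖ ^ 2 = (1 + s ^ 2) * (1 + x ^ 2) / (1 + s ^ 2 * x ^ 2) := by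
  rw [norm_sq_vertexMoebius]
  field_simp
  ring

lemma Φm_unit_mul {u : ℂ} (hu : ‖u‖ = 1) (z : ℂ) : Φm (u * z) = u * Φm z := by
  rw [Φm, Φm, norm_mul, hu, one_mul]
  ring

lemma xb_unit_mul {u : ℂ} (hu : ‖u‖ = 1) (z : ℂ) : xb (u * z) = xb z := by
  rw [xb, xb, norm_mul, hu, one_mul]

lemma Φm_vertexMoebius (s x : ℝ) :
    Φm (vertexMoebius s x) =
      I * ((((1 - s ^ 2) / (1 + s ^ 2) * (2 * x / (1 + x ^ 2)) : ℝ) : ℂ) -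
        I * ((2 * s / (1 + s ^ 2) : ℝ) : ℂ)) := by
  rw [Φm, one_add_norm_sq_vertexMoebius, vertexMoebius_eq_div]
  have : (1 + s ^ 2 * x ^ 2 : ℂ) ≠ 0 := by norm_cast; positivity
  have : (1 + s ^ 2 : ℂ) ≠ 0 := by norm_cast; positivity
  have : (1 + x ^ 2 : ℂ) ≠ 0 := by norm_cast; positivity
  push_cast
  field_simp
  ring_nf
  rw [I_sq]
  ring

lemma xb_vertexMoebius (s x : ℝ) :
    xb (vertexMoebius s x) = (1 - s ^ 2) / (1 + s ^ 2) * ((1 - x ^ 2) / (1 + x ^ 2)) := by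
  rw [xb, one_add_norm_sq_vertexMoebius, norm_sq_vertexMoebius]
  have : (1 + s ^ 2 * x ^ 2 : ℝ) ≠ 0 := by positivity
  field_simp
  ring

lemma exp_I_mul_add_pi_div_two (ω : ℝ) :
    exp (I * ((ω + Real.pi / 2 : ℝ) : ℂ)) = exp (I * ω) * I := by
  rw [ofReal_add, mul_add, exp_add, ofReal_div, ofReal_ofNat, mul_comm I (_ / 2),
    exp_pi_div_two_mul_I]

lemma γv_eq_exp_mul_vertexMoebius (ω s t : ℝ) :
    γv ω s t = exp (I * ω) * vertexMoebius s (Real.tanh (t / 2)) :=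
  rfl

lemma Φm_γv (ω s t : ℝ) :
    Φm (γv ω s t) = exp (I * ((ω + Real.pi / 2 : ℝ) : ℂ)) *
      ((((1 - s ^ 2) / (1 + s ^ 2) * Real.tanh t : ℝ) : ℂ) -
        I * ((2 * s / (1 + s ^ 2) : ℝ) : ℂ)) := by
  rw [γv_eq_exp_mul_vertexMoebius, Φm_unit_mul (norm_exp_I_mul_ofReal ω), Φm_vertexMoebius,
    exp_I_mul_add_pi_div_two, ← Real.tanh_two_mul, mul_div_cancel₀ t two_ne_zero, mul_assoc]

lemma xb_γv (ω s t : ℝ) :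
    xb (γv ω s t) =
      (1 - s ^ 2) / (1 + s ^ 2) * ((1 - Real.tanh (t / 2) ^ 2) / (1 + Real.tanh (t / 2) ^ 2)) := by
  rw [γv_eq_exp_mul_vertexMoebius, xb_unit_mul (norm_exp_I_mul_ofReal ω), xb_vertexMoebius]

end

/-- Explicit projective equivalence: for `s ∈ (−1,1)`,
`Φ(γ^v_{ω,s}(t)) = e^{i(ω+π/2)}·(((1−s²)/(1+s²))·tanh t − i·(2s/(1+s²)))`;
equivalently, with `α = −2·arctan s` and `β = ω − π/2 − α`,
`cos α = (1−s²)/(1+s²)`, `sin α = −2s/(1+s²)`, and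
`Φ(γ^v_{ω,s}(t)) = γ^E_{β,α}(u(t))` with `u(t) = cos α · tanh t`; moreover
`u′(t) = ((1+s²)/(1−s²))·x(γ^v_{ω,s}(t))²`. -/
theorem projective_equivalence (ω s : ℝ) (hs : s ∈ Set.Ioo (-1 : ℝ) 1) (t : ℝ) :
    Φm (γv ω s t) =
      Complex.exp (Complex.I * ((ω + Real.pi / 2 : ℝ) : ℂ)) *
        ((((1 - s ^ 2) / (1 + s ^ 2) * Real.tanh t : ℝ) : ℂ) -
          Complex.I * (((2 * s / (1 + s ^ 2) : ℝ)) : ℂ)) ∧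
    Real.cos (-2 * Real.arctan s) = (1 - s ^ 2) / (1 + s ^ 2) ∧
    Real.sin (-2 * Real.arctan s) = -2 * s / (1 + s ^ 2) ∧
    Φm (γv ω s t) =
      γE (ω - Real.pi / 2 - (-2 * Real.arctan s)) (-2 * Real.arctan s)
        (Real.cos (-2 * Real.arctan s) * Real.tanh t) ∧
    deriv (fun τ : ℝ => Real.cos (-2 * Real.arctan s) * Real.tanh τ) t =
      (1 + s ^ 2) / (1 - s ^ 2) * xb (γv ω s t) ^ 2 := by
  have hcos : Real.cos (-2 * Real.arctan s) = (1 - s ^ 2) / (1 + s ^ 2) := by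
    rw [neg_mul, Real.cos_neg, Real.cos_two_mul_arctan]
  have hsin : Real.sin (-2 * Real.arctan s) = -2 * s / (1 + s ^ 2) := by
    rw [neg_mul, Real.sin_neg, Real.sin_two_mul_arctan, neg_mul, neg_div]
  refine ⟨Φm_γv ω s t, hcos, hsin, ?_, ?_⟩
  · rw [Φm_γv, γE, hsin, hcos,
      show ω - Real.pi / 2 - -2 * Real.arctan s + -2 * Real.arctan s + Real.pi = ω + Real.pi / 2 by
        ring]
    push_cast
    ring
  · have hs2 : 1 - s ^ 2 ≠ 0 := by nlinarith [hs.1, hs.2]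
    have htanh : Real.tanh t = 2 * Real.tanh (t / 2) / (1 + Real.tanh (t / 2) ^ 2) := by
      rw [← Real.tanh_two_mul, mul_div_cancel₀ t two_ne_zero]
    rw [((Real.hasDerivAt_tanh t).const_mul _).deriv, hcos, xb_γv, htanh]
    field_simp
    ring
end
end
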